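/- Hydrogen identity over finite fields: for every finite field F, casting the integer matrices L and |H| entrywise into F, the matrix L is invertible over F with inverse L − |H|; that is, L·(L − |H|) = 1 and (L − |H|)·L = 1 hold in the matrix ring over F, so the hydrogen identity |H| = L − L⁻¹ holds over F. -/

import Mathlib

open Matrix

variable {V : Type*} [Fintype V] [DecidableEq V]

/-- The simplices of the 1-dimensional simplicial complex of a graph: vertices and edges. -/
abbrev Simplex (G : SimpleGraph V) [DecidableRel G.Adj] := V ⊕ G.edgeSet

variable (G : SimpleGraph V) [DecidableRel G.Adj]

/-- The vertex set of a simplex. -/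
def sVerts : Simplex G → Set V
  | Sum.inl u => {u}
  | Sum.inr f => {w | w ∈ (f : Sym2 V)}

instance (x : Simplex G) (w : V) : Decidable (w ∈ sVerts G x) :=
  match x with
  | Sum.inl u => decidable_of_iff (w = u) (by simp [sVerts])
  | Sum.inr f => decidable_of_iff (w ∈ (f : Sym2 V)) (by simp [sVerts])

/-- Two simplices touch if their vertex sets intersect. -/
def touches (x y : Simplex G) : Prop := ∃ w, w ∈ sVerts G x ∧ w ∈ sVerts G y

instance : DecidableRel (touches G) := fun _ _ => Fintype.decidableExistsFintype

/-- The connection Laplacian. -/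
def connL : Matrix (Simplex G) (Simplex G) ℤ :=
  Matrix.of fun x y => if touches G x y then 1 else 0

/-- The sign-less incidence matrix. -/
def absd : Matrix (Simplex G) (Simplex G) ℤ :=
  Matrix.of fun a b =>
    match a, b with
    | Sum.inr f, Sum.inl u => if u ∈ (f : Sym2 V) then 1 else 0
    | _, _ => 0

/-- The sign-less Hodge Laplacian. -/
def absH : Matrix (Simplex G) (Simplex G) ℤ := (absd G + (absd G)ᵀ) ^ 2

/-!
Write `J` for the diagonal matrix `(-1)^dim x` (`signature G`) and `d` for `|d|`. Entrywise,
`L = J + d + dᵀ + d dᵀ`: in the edge–edge block `(d dᵀ)(f, g) = |f ∩ g|`, which is `2` for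
`f = g` and otherwise `1` or `0` according as `f` and `g` touch. Since `d` maps vertices to
edges, `d² = 0`, `J d = -d` and `d J = d`, so `L = (J + d)(1 + dᵀ)` is the product of an
involution and a unipotent matrix, both invertible over `ℤ`, with
`L⁻¹ = (1 - dᵀ)(J + d) = J + d + dᵀ - dᵀ d = L - |H|`, because `|H| = d dᵀ + dᵀ d`.
Casting to `F` is a ring homomorphism of matrix rings, so the identity holds over any ring.
-/

open Finset

set_option linter.unusedSectionVars false

lemma one_add_mul_one_sub_of_mul_self_eq_zero {R : Type*} [Ring R] {n : R} (h : n * n = 0) :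
    (1 + n) * (1 - n) = 1 := by
  simp [add_mul, mul_sub, h]

lemma one_sub_mul_one_add_of_mul_self_eq_zero {R : Type*} [Ring R] {n : R} (h : n * n = 0) :
    (1 - n) * (1 + n) = 1 := by
  simp [sub_mul, mul_add, h]

def Units.oneAddOfMulSelfEqZero {R : Type*} [Ring R] {n : R} (h : n * n = 0) : Rˣ :=
  ⟨1 + n, 1 - n, one_add_mul_one_sub_of_mul_self_eq_zero h,
    one_sub_mul_one_add_of_mul_self_eq_zero h⟩

lemma Sym2.card_toFinset_inter_le_one {α : Type*} [DecidableEq α] {z w : Sym2 α} (h : z ≠ w) :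
    #(z.toFinset ∩ w.toFinset) ≤ 1 := by
  refine Finset.card_le_one.mpr fun a ha b hb => by_contra fun hab => h ?_
  simp only [Finset.mem_inter, Sym2.mem_toFinset] at ha hb
  rw [(Sym2.mem_and_mem_iff hab).mp ⟨ha.1, hb.1⟩, (Sym2.mem_and_mem_iff hab).mp ⟨ha.2, hb.2⟩]

open Classical in
lemma Sym2.card_toFinset_inter {α : Type*} [DecidableEq α] {z w : Sym2 α} (hz : ¬z.IsDiag) :
    (#(z.toFinset ∩ w.toFinset) : ℤ) =
      (if ∃ a, a ∈ z ∧ a ∈ w then 1 else 0) + (if z = w then 1 else 0) := by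
  by_cases hzw : z = w
  · subst hzw
    simp [Sym2.card_toFinset_of_not_isDiag z hz, show ∃ a, a ∈ z from ⟨_, Sym2.out_fst_mem z⟩]
  · have hne : (z.toFinset ∩ w.toFinset).Nonempty ↔ ∃ a, a ∈ z ∧ a ∈ w := by
      simp [Finset.Nonempty, Sym2.mem_toFinset]
    have hle := Sym2.card_toFinset_inter_le_one hzw
    by_cases hmeet : ∃ a, a ∈ z ∧ a ∈ w
    · have := Finset.card_pos.mpr (hne.mpr hmeet)
      simp only [hmeet, hzw, if_true, if_false]
      omega
    · simp [hmeet, hzw, Finset.not_nonempty_iff_eq_empty.mp (hne.not.mpr hmeet)]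

@[simp]
lemma touches_inl_inl_iff {u w : V} : touches G (.inl u) (.inl w) ↔ u = w := by
  simp [touches, sVerts, eq_comm]

@[simp]
lemma touches_inl_inr_iff {u : V} {f : G.edgeSet} :
    touches G (.inl u) (.inr f) ↔ u ∈ (f : Sym2 V) := by
  simp [touches, sVerts]

@[simp]
lemma touches_inr_inl_iff {u : V} {f : G.edgeSet} :
    touches G (.inr f) (.inl u) ↔ u ∈ (f : Sym2 V) := by
  simp [touches, sVerts]

lemma touches_inr_inr_iff {f g : G.edgeSet} :
    touches G (.inr f) (.inr g) ↔ ∃ w, w ∈ (f : Sym2 V) ∧ w ∈ (g : Sym2 V) :=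
  Iff.rfl

@[simp]
lemma absd_inl_apply (u : V) (y : Simplex G) : absd G (.inl u) y = 0 := rfl

@[simp]
lemma absd_apply_inr (x : Simplex G) (f : G.edgeSet) : absd G x (.inr f) = 0 := by
  cases x <;> rfl

@[simp]
lemma absd_inr_inl (f : G.edgeSet) (u : V) :
    absd G (.inr f) (.inl u) = if u ∈ (f : Sym2 V) then 1 else 0 := rfl

lemma absd_mul_absd : absd G * absd G = 0 := by
  ext x y
  simp [mul_apply, Fintype.sum_sum_type]

lemma absd_mul_absd_transpose_inr_inr (f g : G.edgeSet) :
    (absd G * (absd G)ᵀ) (.inr f) (.inr g) =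
      #((f : Sym2 V).toFinset ∩ (g : Sym2 V).toFinset) := by
  simp only [mul_apply, Fintype.sum_sum_type, transpose_apply, absd_inr_inl, absd_apply_inr,
    mul_zero, Finset.sum_const_zero, add_zero]
  simp_rw [ite_zero_mul_ite_zero, mul_one, Finset.sum_boole]
  congr 2
  ext; simp [Sym2.mem_toFinset]

lemma absd_transpose_mul_absd_transpose : (absd G)ᵀ * (absd G)ᵀ = 0 := by
  rw [← transpose_mul, absd_mul_absd, transpose_zero]

lemma absH_eq_add : absH G = absd G * (absd G)ᵀ + (absd G)ᵀ * absd G := by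
  rw [absH, sq, add_mul, mul_add, mul_add, absd_mul_absd, absd_transpose_mul_absd_transpose,
    zero_add, add_zero]

def signature : Matrix (Simplex G) (Simplex G) ℤ :=
  diagonal (Sum.elim (fun _ => 1) (fun _ => -1))

lemma signature_mul_signature : signature G * signature G = 1 := by
  rw [signature, diagonal_mul_diagonal, ← diagonal_one]
  congr 1
  ext (u | f) <;> simp

lemma signature_mul_absd : signature G * absd G = -absd G := by
  ext (u | f) y <;> simp [signature, diagonal_mul]

lemma absd_mul_signature : absd G * signature G = absd G := by
  ext x (u | f) <;> simp [signature, mul_diagonal]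

lemma signature_transpose : (signature G)ᵀ = signature G :=
  diagonal_transpose _

lemma signature_mul_absd_transpose : signature G * (absd G)ᵀ = (absd G)ᵀ := by
  rw [← signature_transpose, ← transpose_mul, absd_mul_signature]

lemma absd_transpose_mul_signature : (absd G)ᵀ * signature G = -(absd G)ᵀ := by
  rw [← signature_transpose, ← transpose_mul, signature_mul_absd, transpose_neg]

lemma connL_eq_add :
    connL G = signature G + absd G + (absd G)ᵀ + absd G * (absd G)ᵀ := by
  ext (u | f) (w | g)
  · simp [connL, signature, diagonal_apply, mul_apply]
  · simp [connL, signature, mul_apply]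
  · simp [connL, signature, mul_apply]
  · have hf : ¬(f : Sym2 V).IsDiag := G.not_isDiag_of_mem_edgeSet f.2
    simp only [connL, signature, Matrix.add_apply, of_apply, diagonal_apply, absd_apply_inr,
      transpose_apply, absd_mul_absd_transpose_inr_inr, Sym2.card_toFinset_inter hf,
      touches_inr_inr_iff, Sum.inr.injEq, Subtype.coe_inj]
    split_ifs <;> simp_all

lemma signature_add_absd_mul_self :
    (signature G + absd G) * (signature G + absd G) = 1 := by
  rw [add_mul, mul_add, mul_add, signature_mul_signature, signature_mul_absd, absd_mul_signature,
    absd_mul_absd]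
  abel

lemma connL_eq_mul : connL G = (signature G + absd G) * (1 + (absd G)ᵀ) := by
  rw [connL_eq_add, mul_one_add, add_mul, signature_mul_absd_transpose]
  abel

lemma connL_sub_absH_eq_mul :
    connL G - absH G = (1 - (absd G)ᵀ) * (signature G + absd G) := by
  rw [connL_eq_add, absH_eq_add, sub_mul, one_mul, mul_add, absd_transpose_mul_signature]
  abel

def connLUnit : (Matrix (Simplex G) (Simplex G) ℤ)ˣ :=
  ⟨_, _, signature_add_absd_mul_self G, signature_add_absd_mul_self G⟩ *
    Units.oneAddOfMulSelfEqZero (absd_transpose_mul_absd_transpose G)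

lemma val_connLUnit : (connLUnit G : Matrix (Simplex G) (Simplex G) ℤ) = connL G := by
  rw [connL_eq_mul]
  rfl

lemma val_inv_connLUnit :
    ((connLUnit G)⁻¹ : (Matrix (Simplex G) (Simplex G) ℤ)ˣ) = connL G - absH G := by
  rw [connL_sub_absH_eq_mul]
  rfl

theorem hydrogen_finite_field (F : Type*) [Field F] :
    (connL G).map (Int.cast : ℤ → F)
        * ((connL G).map (Int.cast : ℤ → F) - (absH G).map (Int.cast : ℤ → F)) = 1 ∧
    ((connL G).map (Int.cast : ℤ → F) - (absH G).map (Int.cast : ℤ → F))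
        * (connL G).map (Int.cast : ℤ → F) = 1 := by
  let u := Units.map (Int.castRingHom F).mapMatrix.toMonoidHom (connLUnit G)
  have hu : (u : Matrix (Simplex G) (Simplex G) F) = (connL G).map Int.cast := by
    rw [Units.coe_map, val_connLUnit]
    rfl
  have hu_inv : ((u⁻¹ : (Matrix (Simplex G) (Simplex G) F)ˣ) : Matrix (Simplex G) (Simplex G) F) =
      (connL G).map Int.cast - (absH G).map Int.cast := by
    rw [Units.coe_map_inv, val_inv_connLUnit]
    exact Matrix.map_sub _ (fun _ _ => Int.cast_sub _ _) _ _
  rw [← hu_inv, ← hu]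
  exact ⟨u.mul_inv, u.inv_mul⟩
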